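/- Let K and K̃ be real symmetric positive semidefinite n×n matrices with K - K̃ positive semidefinite and ‖K - K̃‖ ≤ M·λ_{k+1}(K) for some M ≥ 0, and let β > 0. Then, with S = (K̃ + βI)^{-1/2}(K + βI)(K̃ + βI)^{-1/2}, one has I ≤ S ≤ I + M·λ_{k+1}(K)·(K̃ + βI)^{-1} in the Loewner order. -/

import Mathlib

open scoped Matrix.Norms.L2Operator
open Matrix

noncomputable def Matrix.PosSemidef.sqrt {n 𝕜 : Type*} [Fintype n] [DecidableEq n] [RCLike 𝕜]
    [PartialOrder 𝕜]     {A : Matrix n n 𝕜} (hA : A.PosSemidef) : Matrix n n 𝕜 :=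
  hA.1.eigenvectorUnitary.1 * diagonal ((↑) ∘ (√·) ∘ hA.1.eigenvalues) *
    (star hA.1.eigenvectorUnitary : Matrix n n 𝕜)

/-! With `Q = (K̃ + βI)^{1/2}` and `E = K - K̃` one has `S = 1 + Q⁻¹ E Q⁻¹` and
`(K̃ + βI)⁻¹ = Q⁻¹ Q⁻¹`, so both inequalities are the congruences by the Hermitian matrix `Q⁻¹`
of `0 ≤ E ≤ ‖E‖ • 1 ≤ M λ_{k+1}(K) • 1`, and congruence preserves the Loewner order. -/

open scoped MatrixOrder

namespace Matrix

variable {ι : Type*} [Fintype ι] [DecidableEq ι]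

lemma PosSemidef.sqrt_eq_cfcSqrt {A : Matrix ι ι ℝ} (hA : A.PosSemidef) :
    hA.sqrt = CFC.sqrt A := by
  rw [CFC.sqrt_eq_real_sqrt A hA.nonneg, cfcₙ_eq_cfc, hA.isHermitian.cfc_eq]
  rfl

lemma PosSemidef.posSemidef_sqrt {A : Matrix ι ι ℝ} (hA : A.PosSemidef) : hA.sqrt.PosSemidef :=
  hA.sqrt_eq_cfcSqrt ▸ (CFC.sqrt_nonneg A).posSemidef

lemma PosSemidef.sqrt_mul_self {A : Matrix ι ι ℝ} (hA : A.PosSemidef) : hA.sqrt * hA.sqrt = A :=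
  hA.sqrt_eq_cfcSqrt ▸ CFC.sqrt_mul_sqrt_self A hA.nonneg

lemma posSemidef_smul_one_sub_of_l2_opNorm_le {D : Matrix ι ι ℝ} (hD : D.IsHermitian) {c : ℝ}
    (hc : ‖D‖ ≤ c) : (c • (1 : Matrix ι ι ℝ) - D).PosSemidef := by
  refine .of_dotProduct_mulVec_nonneg ((isHermitian_one.smul (.all c)).sub hD) fun x => ?_
  let v : EuclideanSpace ℝ ι := WithLp.toLp 2 x
  have hv : x ⬝ᵥ x = ‖v‖ * ‖v‖ := by
    rw [← real_inner_self_eq_norm_mul_norm, EuclideanSpace.inner_toLp_toLp]; simp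
  have hDx : x ⬝ᵥ (D *ᵥ x) ≤ c * (x ⬝ᵥ x) := calc
    x ⬝ᵥ (D *ᵥ x) = inner ℝ v (WithLp.toLp 2 (D *ᵥ x)) := by
      rw [EuclideanSpace.inner_toLp_toLp]; simp [dotProduct_comm]
    _ ≤ ‖v‖ * ‖(WithLp.toLp 2 (D *ᵥ x) : EuclideanSpace ℝ ι)‖ := real_inner_le_norm _ _
    _ ≤ ‖v‖ * (‖D‖ * ‖v‖) := by gcongr; exact D.l2_opNorm_mulVec v
    _ ≤ c * (x ⬝ᵥ x) := by rw [hv]; nlinarith [norm_nonneg v]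
  simpa [sub_mulVec, smul_mulVec] using hDx

variable {R : Type*} [Field R]

lemma inv_mul_add_mul_inv_of_mul_self_eq {Q A E : Matrix ι ι R} (hQA : Q * Q = A)
    (hA : IsUnit A.det) : Q⁻¹ * (A + E) * Q⁻¹ = 1 + Q⁻¹ * E * Q⁻¹ := by
  rw [← hQA, det_mul] at hA
  have hQ : IsUnit Q.det := isUnit_of_mul_isUnit_left hA
  rw [← hQA, Matrix.mul_add, Matrix.add_mul, ← Matrix.mul_assoc, nonsing_inv_mul _ hQ,
    Matrix.one_mul, mul_nonsing_inv _ hQ]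

variable [PartialOrder R] [StarRing R]

lemma PosSemidef.inv_mul_mul_inv {Q E : Matrix ι ι R} (hQ : Q.IsHermitian) (hE : E.PosSemidef) :
    (Q⁻¹ * E * Q⁻¹).PosSemidef := by
  simpa only [hQ.inv.eq] using hE.mul_mul_conjTranspose_same Q⁻¹

lemma one_le_inv_mul_add_mul_inv {Q A E : Matrix ι ι R} (hQ : Q.IsHermitian) (hQA : Q * Q = A)
    (hA : IsUnit A.det) (hE : E.PosSemidef) : (Q⁻¹ * (A + E) * Q⁻¹ - 1).PosSemidef := by
  rw [inv_mul_add_mul_inv_of_mul_self_eq hQA hA, add_sub_cancel_left]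
  exact hE.inv_mul_mul_inv hQ

lemma inv_mul_add_mul_inv_le_one_add_smul_inv {Q A E : Matrix ι ι R} {c : R}
    (hQ : Q.IsHermitian) (hQA : Q * Q = A) (hA : IsUnit A.det)
    (hEc : (c • (1 : Matrix ι ι R) - E).PosSemidef) :
    (1 + c • A⁻¹ - Q⁻¹ * (A + E) * Q⁻¹).PosSemidef := by
  have hconj : Q⁻¹ * (c • 1 - E) * Q⁻¹ = c • A⁻¹ - Q⁻¹ * E * Q⁻¹ := by
    rw [← hQA, Matrix.mul_inv_rev, Matrix.mul_sub, Matrix.sub_mul, Matrix.mul_smul,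
      Matrix.smul_mul, Matrix.mul_one]
  rw [inv_mul_add_mul_inv_of_mul_self_eq hQA hA, add_sub_add_left_eq_sub, ← hconj]
  exact hEc.inv_mul_mul_inv hQ

end Matrix

theorem stmt4_general {n k : ℕ} (hk : k < n)
    (K Kt : Matrix (Fin n) (Fin n) ℝ)
    (hKt : Kt.PosSemidef)
    (hdiff : (K - Kt).PosSemidef)
    (M : ℝ)
    (μ : Fin n → ℝ)
    (hnorm : ‖K - Kt‖ ≤ M * μ ⟨k, hk⟩)
    (β : ℝ) (hβ : 0 < β)
    (h₁ : (Kt + β • (1 : Matrix (Fin n) (Fin n) ℝ)).PosSemidef)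
    (S : Matrix (Fin n) (Fin n) ℝ)
    (hS : S = h₁.sqrt⁻¹ * (K + β • (1 : Matrix (Fin n) (Fin n) ℝ)) * h₁.sqrt⁻¹) :
    (S - 1).PosSemidef ∧
    ((1 + (M * μ ⟨k, hk⟩) • (Kt + β • (1 : Matrix (Fin n) (Fin n) ℝ))⁻¹) - S).PosSemidef := by
  have hA : IsUnit (Kt + β • (1 : Matrix (Fin n) (Fin n) ℝ)).det :=
    (PosDef.posSemidef_add hKt (PosDef.one.smul hβ)).isUnit.map detMonoidHom
  have hQ := h₁.posSemidef_sqrt.isHermitian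
  have hQA := h₁.sqrt_mul_self
  rw [show K = Kt + (K - Kt) by abel, add_right_comm] at hS
  subst hS
  exact ⟨one_le_inv_mul_add_mul_inv hQ hQA hA hdiff,
    inv_mul_add_mul_inv_le_one_add_smul_inv hQ hQA hA
      (posSemidef_smul_one_sub_of_l2_opNorm_le hdiff.isHermitian hnorm)⟩

/-- If `K, K̃` are real symmetric PSD with `K - K̃` PSD,
`‖K - K̃‖ ≤ M λ_{k+1}(K)` and `β > 0`, then with
`S = (K̃ + βI)^{-1/2} (K + βI) (K̃ + βI)^{-1/2}` one has
`I ≤ S ≤ I + M λ_{k+1}(K) (K̃ + βI)⁻¹` in the Loewner order. -/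
theorem stmt4 {n k : ℕ} (hk : k < n)
    (K Kt : Matrix (Fin n) (Fin n) ℝ)
    (hK : K.PosSemidef) (hKt : Kt.PosSemidef)
    (hdiff : (K - Kt).PosSemidef)
    (M : ℝ) (hM : 0 ≤ M)
    (μ : Fin n → ℝ) (hμanti : Antitone μ)
    (hμ : ∃ e : Equiv.Perm (Fin n), ∀ i, μ i = hK.isHermitian.eigenvalues (e i))
    (hnorm : ‖K - Kt‖ ≤ M * μ ⟨k, hk⟩)
    (β : ℝ) (hβ : 0 < β)
    (h₁ : (Kt + β • (1 : Matrix (Fin n) (Fin n) ℝ)).PosSemidef)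
    (S : Matrix (Fin n) (Fin n) ℝ)
    (hS : S = h₁.sqrt⁻¹ * (K + β • (1 : Matrix (Fin n) (Fin n) ℝ)) * h₁.sqrt⁻¹) :
    (S - 1).PosSemidef ∧
    ((1 + (M * μ ⟨k, hk⟩) • (Kt + β • (1 : Matrix (Fin n) (Fin n) ℝ))⁻¹) - S).PosSemidef :=
  stmt4_general hk K Kt hKt hdiff M μ hnorm β hβ h₁ S hS
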